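/- arXiv:2506.21483 — 2 statements merged into one kernel-verified Lean document; each statement's English description precedes it below -/
import Mathlib

section
/- Let S ≥ 2 and suppose real numbers V^1,...,V^S > 0, L^1,...,L^{S-1} > 0, ε > 0, and nonnegative reals δ^1 ≤ δ^2 ≤ ... ≤ δ^S with δ^1 > 0 are given, along with σ^1,...,σ^S ∈ ℝ satisfying the recurrences: V^1·σ^1 = −L^1·δ^1; V^j·σ^j = −∑_{k=1}^j L^k·δ^k + ∑_{k=1}^{j-1} V^k·(δ^k − δ^{k+1}) for 2 ≤ j ≤ S−1; and ε·V^S·σ^S = −∑_{k=1}^{S-1} L^k·δ^k + ∑_{k=1}^{S-1} V^k·(δ^k − δ^{k+1}). Then σ^j < 0 for every j ∈ {1,...,S}. -/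
theorem stmt_6 (S : ℕ) (hS : 2 ≤ S) (V L δ σ : ℕ → ℝ) (ε : ℝ)
    (hV : ∀ j, 1 ≤ j → j ≤ S → 0 < V j)
    (hL : ∀ j, 1 ≤ j → j ≤ S - 1 → 0 < L j)
    (hε : 0 < ε)
    (hδpos : 0 < δ 1)
    (hδmono : ∀ j, 1 ≤ j → j < S → δ j ≤ δ (j + 1))
    (h1 : V 1 * σ 1 = -(L 1 * δ 1))
    (hmid : ∀ j, 2 ≤ j → j ≤ S - 1 →
      V j * σ j = -(∑ k ∈ Finset.Icc 1 j, L k * δ k)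
        + ∑ k ∈ Finset.Icc 1 (j - 1), V k * (δ k - δ (k + 1)))
    (hlast : ε * V S * σ S = -(∑ k ∈ Finset.Icc 1 (S - 1), L k * δ k)
        + ∑ k ∈ Finset.Icc 1 (S - 1), V k * (δ k - δ (k + 1))) :
    ∀ j, 1 ≤ j → j ≤ S → σ j < 0 := by
  have hδ : ∀ k, 1 ≤ k → k ≤ S → 0 < δ k := by
    intro k hk1 hkS
    induction k with
    | zero => omega
    | succ n ih =>
      rcases Nat.eq_zero_or_pos n with h0 | h0
      · subst h0; exact hδpos
      · have hn : 0 < δ n := ih h0 (by omega)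
        have := hδmono n h0 (by omega)
        linarith
  have hsum : ∀ m, 1 ≤ m → m ≤ S - 1 → 0 < ∑ k ∈ Finset.Icc 1 m, L k * δ k := by
    intro m h1m hm
    apply Finset.sum_pos
    · intro k hk
      simp only [Finset.mem_Icc] at hk
      exact mul_pos (hL k hk.1 (by omega)) (hδ k hk.1 (by omega))
    · exact ⟨1, by simp [Finset.mem_Icc]; omega⟩
  have hsum2 : ∀ m, m ≤ S - 1 → ∑ k ∈ Finset.Icc 1 m, V k * (δ k - δ (k + 1)) ≤ 0 := by
    intro m hm
    apply Finset.sum_nonpos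
    intro k hk
    simp only [Finset.mem_Icc] at hk
    have h1 := hδmono k hk.1 (by omega)
    have h2 := hV k hk.1 (by omega)
    nlinarith
  intro j hj1 hjS
  by_cases hjs : j = S
  · subst hjs
    have h := hsum (j - 1) (by omega) le_rfl
    have h2 := hsum2 (j - 1) le_rfl
    have hVj := hV j hj1 le_rfl
    have : ε * V j * σ j < 0 := by rw [hlast]; linarith
    nlinarith [mul_pos hε hVj]
  · have hjS' : j ≤ S - 1 := by omega
    rcases Nat.eq_or_lt_of_le hj1 with h1j | h1j
    · have hV1 := hV 1 le_rfl (by omega)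
      have hLδ := mul_pos (hL 1 le_rfl (by omega)) hδpos
      have : V 1 * σ 1 < 0 := by rw [h1]; linarith
      rw [← h1j]
      nlinarith
    · have hmj := hmid j h1j hjS'
      have h := hsum j hj1 hjS'
      have h2 := hsum2 (j - 1) (by omega)
      have hVj := hV j hj1 (by omega)
      have : V j * σ j < 0 := by rw [hmj]; linarith
      nlinarith
end

section
/- Let S ≥ 2 and C ≥ 1. Suppose for each stage j ∈ {1,...,S}: ∑_{i=1}^C x_i^j = 1, n^j ≠ 0, V^j ≠ 0, ε ≠ 0, and the unperturbed auxiliary equations hold: ∑_i (L^1(x_i^2 − x_i^1) − V^1(y_i^1 − x_i^1))/n^1 = 0; ∑_i (L^j(x_i^{j+1} − x_i^j) − V^j(y_i^j − x_i^j) + V^{j-1}(y_i^{j-1} − x_i^j))/n^j = 0 for 2 ≤ j ≤ S−1; and ∑_i (ε V^S(x_i^S − y_i^S) + V^{S-1}(y_i^{S-1} − x_i^S))/n^S = 0. Then ∑_{i=1}^C y_i^j = 1 for every j ∈ {1,...,S}. -/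
/-! Summing a component balance over the components turns it into a linear relation between the
deficits `∑ y - 1` of neighbouring stages. On stage `j` the deficit of `y^j` enters with the
nonzero factor `V^j` (`ε V^S` on the head), while the liquid sums are `1` and the deficit of
`y^{j-1}` vanishes by induction, so the deficit of `y^j` vanishes as well. -/

open Finset

theorem sum_eq_zero_of_sum_div_eq_zero {ι : Type*} {s : Finset ι} {f : ι → ℝ} {n : ℝ}
    (hn : n ≠ 0) (h : ∑ i ∈ s, f i / n = 0) : ∑ i ∈ s, f i = 0 := by
  rwa [← sum_div, div_eq_zero_iff, or_iff_left hn] at h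

/-- One stage: `x'`, `x` are the liquid compositions of the stage above and of this stage,
`y`, `y'` the vapour compositions of this stage and of the stage below. -/
theorem sum_eq_one_of_stage_balance {ι : Type*} [Fintype ι] {a b c : ℝ} {x' x y y' : ι → ℝ}
    (hb : b ≠ 0) (hx' : ∑ i, x' i = 1) (hx : ∑ i, x i = 1) (hy' : ∑ i, y' i = 1)
    (h : ∑ i, (a * (x' i - x i) - b * (y i - x i) + c * (y' i - x i)) = 0) :
    ∑ i, y i = 1 := by
  simp only [sum_add_distrib, sum_sub_distrib, ← mul_sum, hx', hx, hy'] at h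
  have hdeficit : b * (∑ i, y i - 1) = 0 := by linear_combination -h
  exact sub_eq_zero.mp ((mul_eq_zero.mp hdeficit).resolve_left hb)

theorem stmt_16_general (S C : ℕ) (hS : 2 ≤ S)
    (x y : ℕ → Fin C → ℝ) (L V n : ℕ → ℝ) (ε : ℝ)
    (hxsum : ∀ j, 1 ≤ j → j ≤ S → ∑ i, x j i = 1)
    (hn : ∀ j, 1 ≤ j → j ≤ S → n j ≠ 0)
    (hV : ∀ j, 1 ≤ j → j ≤ S → V j ≠ 0)
    (hε : ε ≠ 0)
    (haux1 : ∑ i, (L 1 * (x 2 i - x 1 i) - V 1 * (y 1 i - x 1 i)) / n 1 = 0)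
    (hauxmid : ∀ j, 2 ≤ j → j ≤ S - 1 →
      ∑ i, (L j * (x (j + 1) i - x j i) - V j * (y j i - x j i)
        + V (j - 1) * (y (j - 1) i - x j i)) / n j = 0)
    (hauxS : ∑ i, (ε * V S * (x S i - y S i) + V (S - 1) * (y (S - 1) i - x S i)) / n S = 0) :
    ∀ j, 1 ≤ j → j ≤ S → ∑ i, y j i = 1 := by
  have hpot : ∑ i, y 1 i = 1 :=
    sum_eq_one_of_stage_balance (c := 0) (y' := x 1) (hV 1 le_rfl (by omega))
      (hxsum 2 (by omega) hS) (hxsum 1 le_rfl (by omega)) (hxsum 1 le_rfl (by omega))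
      (by simpa using sum_eq_zero_of_sum_div_eq_zero (hn 1 le_rfl (by omega)) haux1)
  have hcolumn : ∀ j, 1 ≤ j → j ≤ S - 1 → ∑ i, y j i = 1 := by
    intro j hj
    induction j, hj using Nat.le_induction with
    | base => exact fun _ => hpot
    | succ k hk ih =>
      intro hkS
      have hbalance := sum_eq_zero_of_sum_div_eq_zero (hn (k + 1) (by omega) (by omega))
        (hauxmid (k + 1) (by omega) hkS)
      exact sum_eq_one_of_stage_balance (hV (k + 1) (by omega) (by omega))
        (hxsum (k + 2) (by omega) (by omega)) (hxsum (k + 1) (by omega) (by omega))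
        (ih (by omega)) hbalance
  have hhead : ∑ i, y S i = 1 := by
    have hbalance := sum_eq_zero_of_sum_div_eq_zero (hn S (by omega) le_rfl) hauxS
    refine sum_eq_one_of_stage_balance (a := 0) (c := V (S - 1)) (x' := x S)
      (mul_ne_zero hε (hV S (by omega) le_rfl))
      (hxsum S (by omega) le_rfl) (hxsum S (by omega) le_rfl) (hcolumn (S - 1) (by omega) le_rfl) ?_
    rw [← hbalance]
    exact sum_congr rfl fun i _ => by ring
  intro j hj hjS
  rcases hjS.lt_or_eq with hjS | rfl
  · exact hcolumn j hj (by omega)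
  · exact hhead

theorem stmt_16 (S C : ℕ) (hS : 2 ≤ S) (hC : 1 ≤ C)
    (x y : ℕ → Fin C → ℝ) (L V n : ℕ → ℝ) (ε : ℝ)
    (hxsum : ∀ j, 1 ≤ j → j ≤ S → ∑ i, x j i = 1)
    (hn : ∀ j, 1 ≤ j → j ≤ S → n j ≠ 0)
    (hV : ∀ j, 1 ≤ j → j ≤ S → V j ≠ 0)
    (hε : ε ≠ 0)
    (haux1 : ∑ i, (L 1 * (x 2 i - x 1 i) - V 1 * (y 1 i - x 1 i)) / n 1 = 0)
    (hauxmid : ∀ j, 2 ≤ j → j ≤ S - 1 →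
      ∑ i, (L j * (x (j + 1) i - x j i) - V j * (y j i - x j i)
        + V (j - 1) * (y (j - 1) i - x j i)) / n j = 0)
    (hauxS : ∑ i, (ε * V S * (x S i - y S i) + V (S - 1) * (y (S - 1) i - x S i)) / n S = 0) :
    ∀ j, 1 ≤ j → j ≤ S → ∑ i, y j i = 1 :=
  stmt_16_general S C hS x y L V n ε hxsum hn hV hε haux1 hauxmid hauxS
end
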